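/- Suppose positive functions V_0, ..., V_m satisfy V_1(x) ≥ Σ_{n≥0} K^n V_0(x) and, for each k, K V_{k+1} ≤ V_{k+1} - V_k, where K^n V_0(x) = E_x[ V_0(X_n) Π_{l=1}^n Df_l(X_{l-1}) ]. Then V_m(x) ≥ Σ_{n=0}^∞ binom(n+m-1, m-1) K^n V_0(x). -/

import Mathlib

open MeasureTheory ENNReal

/-- The contractive drift operator `KV(x) = E[Df(x) V(f(x))]`. -/
noncomputable def Kop {X Ω : Type*} [MeasurableSpace Ω] (μ : Measure Ω)
    (f : Ω → X → X) (Df : Ω → X → ℝ≥0∞) : (X → ℝ≥0∞) → X → ℝ≥0∞ :=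
  fun V x => ∫⁻ ω, Df ω x * V (f ω x) ∂μ

section Aux

variable {X Ω : Type*} [MeasurableSpace Ω] (μ : Measure Ω) (f : Ω → X → X)
  (Df : Ω → X → ℝ≥0∞)

lemma Kop_mono {V W : X → ℝ≥0∞} (h : ∀ y, V y ≤ W y) :
    ∀ x, Kop μ f Df V x ≤ Kop μ f Df W x := fun x =>
  lintegral_mono fun ω => mul_le_mul_right (h _) _

lemma Kop_iterate_mono (n : ℕ) {V W : X → ℝ≥0∞} (h : ∀ y, V y ≤ W y) :
    ∀ x, (Kop μ f Df)^[n] V x ≤ (Kop μ f Df)^[n] W x := by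
  induction n generalizing V W with
  | zero => simpa using h
  | succ n ih =>
    intro x
    rw [Function.iterate_succ_apply, Function.iterate_succ_apply]
    exact ih (Kop_mono μ f Df h) x

lemma Kop_add (V W : X → ℝ≥0∞) :
    ∀ x, Kop μ f Df V x + Kop μ f Df W x ≤ Kop μ f Df (fun y => V y + W y) x := by
  intro x
  have h := le_lintegral_add (μ := μ) (fun ω => Df ω x * V (f ω x))
    (fun ω => Df ω x * W (f ω x))
  simpa [Kop, mul_add] using h

lemma Kop_const (c : ℝ≥0∞) (V : X → ℝ≥0∞) :
    ∀ x, c * Kop μ f Df V x ≤ Kop μ f Df (fun y => c * V y) x := by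
  intro x
  have h := lintegral_const_mul_le (μ := μ) c (fun ω => Df ω x * V (f ω x))
  simpa [Kop, mul_left_comm] using h

lemma Kop_iterate_add (n : ℕ) (V W : X → ℝ≥0∞) :
    ∀ x, (Kop μ f Df)^[n] V x + (Kop μ f Df)^[n] W x
      ≤ (Kop μ f Df)^[n] (fun y => V y + W y) x := by
  induction n generalizing V W with
  | zero => intro x; exact le_rfl
  | succ n ih =>
    intro x
    rw [Function.iterate_succ_apply, Function.iterate_succ_apply,
      Function.iterate_succ_apply]
    exact le_trans (ih _ _ x) (Kop_iterate_mono μ f Df n (Kop_add μ f Df V W) x)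

lemma Kop_iterate_const (n : ℕ) (c : ℝ≥0∞) (V : X → ℝ≥0∞) :
    ∀ x, c * (Kop μ f Df)^[n] V x ≤ (Kop μ f Df)^[n] (fun y => c * V y) x := by
  induction n generalizing V with
  | zero => intro x; exact le_rfl
  | succ n ih =>
    intro x
    rw [Function.iterate_succ_apply, Function.iterate_succ_apply]
    exact le_trans (ih _ x) (Kop_iterate_mono μ f Df n (Kop_const μ f Df c V) x)

lemma Kop_iterate_finsetSum (n : ℕ) (s : Finset ℕ) (g : ℕ → X → ℝ≥0∞) :
    ∀ x, (∑ k ∈ s, (Kop μ f Df)^[n] (g k) x)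
      ≤ (Kop μ f Df)^[n] (fun y => ∑ k ∈ s, g k y) x := by
  classical
  induction s using Finset.induction with
  | empty => intro x; simp
  | insert a s hne ih =>
    intro x
    rw [Finset.sum_insert hne]
    calc (Kop μ f Df)^[n] (g a) x + ∑ k ∈ s, (Kop μ f Df)^[n] (g k) x
        ≤ (Kop μ f Df)^[n] (g a) x + (Kop μ f Df)^[n] (fun y => ∑ k ∈ s, g k y) x :=
          add_le_add_right (ih x) _
      _ ≤ (Kop μ f Df)^[n] (fun y => g a y + ∑ k ∈ s, g k y) x :=
          Kop_iterate_add μ f Df n _ _ x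
      _ = (Kop μ f Df)^[n] (fun y => ∑ k ∈ insert a s, g k y) x := by
          simp [Finset.sum_insert hne]

lemma Kop_iterate_tsum (n : ℕ) (g : ℕ → X → ℝ≥0∞) :
    ∀ x, (∑' k : ℕ, (Kop μ f Df)^[n] (g k) x)
      ≤ (Kop μ f Df)^[n] (fun y => ∑' k : ℕ, g k y) x := by
  intro x
  rw [ENNReal.tsum_eq_iSup_sum]
  refine iSup_le fun s => ?_
  refine le_trans (Kop_iterate_finsetSum μ f Df n s g x) ?_
  exact Kop_iterate_mono μ f Df n (fun y => ENNReal.sum_le_tsum s) x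

lemma Kop_geom (W S : X → ℝ≥0∞) (h : ∀ y, Kop μ f Df W y + S y ≤ W y) :
    ∀ x, (∑' j : ℕ, (Kop μ f Df)^[j] S x) ≤ W x := by
  have key : ∀ N : ℕ, ∀ x,
      (∑ j ∈ Finset.range N, (Kop μ f Df)^[j] S x) + (Kop μ f Df)^[N] W x ≤ W x := by
    intro N
    induction N with
    | zero => intro x; simp
    | succ N ih =>
      intro x
      rw [Finset.sum_range_succ, Function.iterate_succ_apply]
      calc (∑ j ∈ Finset.range N, (Kop μ f Df)^[j] S x + (Kop μ f Df)^[N] S x)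
            + (Kop μ f Df)^[N] (Kop μ f Df W) x
          = (∑ j ∈ Finset.range N, (Kop μ f Df)^[j] S x)
            + ((Kop μ f Df)^[N] (Kop μ f Df W) x + (Kop μ f Df)^[N] S x) := by ring
        _ ≤ (∑ j ∈ Finset.range N, (Kop μ f Df)^[j] S x)
            + (Kop μ f Df)^[N] (fun y => Kop μ f Df W y + S y) x :=
            add_le_add_right (Kop_iterate_add μ f Df N _ _ x) _
        _ ≤ (∑ j ∈ Finset.range N, (Kop μ f Df)^[j] S x) + (Kop μ f Df)^[N] W x :=
            add_le_add_right (Kop_iterate_mono μ f Df N h x) _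
        _ ≤ W x := ih x
  intro x
  rw [ENNReal.tsum_eq_iSup_nat]
  exact iSup_le fun N => le_trans (le_add_right le_rfl) (key N x)

end Aux

lemma hockey_stick (M N : ℕ) :
    ∑ n ∈ Finset.range (N + 1), (n + M).choose M = (N + M + 1).choose (M + 1) := by
  induction N with
  | zero => simp
  | succ N ih =>
    rw [Finset.sum_range_succ, ih, show N + 1 + M = N + M + 1 by ring,
      Nat.choose_succ_succ' (N + M + 1) M]
    ring

/-- If `V₁ ≥ Σ_n K^n V₀` and `K V_{k+1} + V_k ≤ V_{k+1}` for `k = 0, ..., m-1`, then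
`V_m(x) ≥ Σ_n binom(n+m-1, m-1) K^n V₀ (x)`, where
`K^n V₀(x) = E_x[V₀(X_n) Π_{l=1}^n Df_l(X_{l-1})]`. -/
theorem stmt8 {X Ω : Type*} [MeasurableSpace Ω] (μ : Measure Ω) [IsProbabilityMeasure μ]
    (f : Ω → X → X) (Df : Ω → X → ℝ≥0∞) (m : ℕ) (hm : 1 ≤ m) (V : ℕ → X → ℝ≥0∞)
    (h1 : ∀ x, (∑' n : ℕ, (Kop μ f Df)^[n] (V 0) x) ≤ V 1 x)
    (hk : ∀ k < m, ∀ x, Kop μ f Df (V (k + 1)) x + V k x ≤ V (k + 1) x) :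
    ∀ x, (∑' n : ℕ, ((n + m - 1).choose (m - 1) : ℝ≥0∞) * (Kop μ f Df)^[n] (V 0) x)
      ≤ V m x := by
  obtain ⟨m', rfl⟩ : ∃ m', m = m' + 1 := ⟨m - 1, by omega⟩
  have main : ∀ M : ℕ,
      (∀ k < M + 1, ∀ x, Kop μ f Df (V (k + 1)) x + V k x ≤ V (k + 1) x) →
      ∀ x, (∑' n : ℕ, ((n + M).choose M : ℝ≥0∞) * (Kop μ f Df)^[n] (V 0) x)
        ≤ V (M + 1) x := by
    intro M
    induction M with
    | zero => intro _ x; simpa using h1 x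
    | succ M ih =>
      intro hk2 x
      have IH : ∀ y, (∑' n : ℕ, ((n + M).choose M : ℝ≥0∞) * (Kop μ f Df)^[n] (V 0) y)
          ≤ V (M + 1) y := ih fun k hk' => hk2 k (by omega)
      set T : X → ℝ≥0∞ :=
        fun y => ∑' n : ℕ, ((n + M).choose M : ℝ≥0∞) * (Kop μ f Df)^[n] (V 0) y with hT
      have hW : ∀ y, Kop μ f Df (V (M + 2)) y + T y ≤ V (M + 2) y := fun y =>
        le_trans (add_le_add_right (IH y) _) (hk2 (M + 1) (by omega) y)
      have hA : ∀ y, (∑' j : ℕ, (Kop μ f Df)^[j] T y) ≤ V (M + 2) y :=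
        Kop_geom μ f Df _ _ hW
      -- notation
      set a : ℕ → ℝ≥0∞ := fun N => (Kop μ f Df)^[N] (V 0) x with ha
      set c : ℕ → ℝ≥0∞ := fun n => ((n + M).choose M : ℝ≥0∞) with hc
      calc ∑' N : ℕ, ((N + (M + 1)).choose (M + 1) : ℝ≥0∞) * a N
          = ∑' N : ℕ, (∑ n ∈ Finset.range (N + 1), c n) * a N := by
            refine tsum_congr fun N => ?_
            congr 1
            rw [hc, show N + (M + 1) = N + M + 1 by ring, ← hockey_stick M N,
              Nat.cast_sum]
        _ = ∑' N : ℕ, ∑ n ∈ Finset.range (N + 1), c n * a N := by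
            refine tsum_congr fun N => ?_
            rw [Finset.sum_mul]
        _ = ∑' N : ℕ, ∑' n : ℕ, (if n ≤ N then c n * a N else 0) := by
            refine tsum_congr fun N => ?_
            rw [tsum_eq_sum (s := Finset.range (N + 1))
              (fun b hb => if_neg fun h => hb (Finset.mem_range.2 (Nat.lt_succ_of_le h)))]
            exact Finset.sum_congr rfl fun n hn =>
              (if_pos (Nat.lt_succ_iff.1 (Finset.mem_range.1 hn))).symm
        _ = ∑' n : ℕ, ∑' N : ℕ, (if n ≤ N then c n * a N else 0) := ENNReal.tsum_comm
        _ = ∑' n : ℕ, ∑' j : ℕ, c n * a (j + n) := by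
            refine tsum_congr fun n => ?_
            rw [← Summable.sum_add_tsum_nat_add' (f := fun N => if n ≤ N then c n * a N else 0)
              (k := n) ENNReal.summable]
            rw [Finset.sum_eq_zero fun i hi =>
              if_neg (Nat.not_le.2 (Finset.mem_range.1 hi)), zero_add]
            exact tsum_congr fun i => if_pos (Nat.le_add_left n i)
        _ = ∑' j : ℕ, ∑' n : ℕ, c n * a (j + n) := ENNReal.tsum_comm
        _ ≤ ∑' j : ℕ, (Kop μ f Df)^[j] T x := by
            refine ENNReal.tsum_le_tsum fun j => ?_
            have step1 : ∀ n : ℕ, c n * a (j + n)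
                ≤ (Kop μ f Df)^[j] (fun y => c n * (Kop μ f Df)^[n] (V 0) y) x := by
              intro n
              rw [ha]
              simp only [Function.iterate_add_apply]
              exact Kop_iterate_const μ f Df j (c n) _ x
            calc ∑' n : ℕ, c n * a (j + n)
                ≤ ∑' n : ℕ, (Kop μ f Df)^[j] (fun y => c n * (Kop μ f Df)^[n] (V 0) y) x :=
                  ENNReal.tsum_le_tsum step1
              _ ≤ (Kop μ f Df)^[j] T x := Kop_iterate_tsum μ f Df j _ x
        _ ≤ V (M + 2) x := hA x
  intro x
  refine le_trans (le_of_eq (tsum_congr fun n => ?_)) (main m'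
    (fun k hk' x => hk k (by omega) x) x)
  have : (n + (m' + 1) - 1).choose (m' + 1 - 1) = (n + m').choose m' := by
    congr 1 <;> omega
  rw [this]
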